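/- Let M > 1, n ≥ 1 a natural number, and v ≥ 0 with (n−1)·M·v ≤ (M−1)·n. Define ψ(α) = P₂(v)α² + P₁(v)α + P₀(v) with P₂, P₁, P₀ as in the context. Then ψ(1) = P₂(v) + P₁(v) + P₀(v) = (M−1)(n−1)v·((−M⁴−6M²−2M+1)n + (−M⁴+6M²+2M+1)(n−1)v) ≤ 0. -/

import Mathlib

/-- The coefficient `P₂(v)` of the auxiliary quadratic `ψ`. -/
noncomputable def P2 (M n v : ℝ) : ℝ :=
  2 * M ^ 2 * (M ^ 2 - 1) * (n - 1) ^ 2 * v ^ 2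
    - 2 * (1 + 2 * M - 3 * M ^ 3 - M ^ 4 + M ^ 5) * (n - 1) * n * v
    + 2 * (M - 1) ^ 2 * (2 * M ^ 2 + M ^ 3 - 1) * n ^ 2

/-- The coefficient `P₁(v)` of the auxiliary quadratic `ψ`. -/
noncomputable def P1 (M n v : ℝ) : ℝ :=
  -(1 + M + 2 * M ^ 2 - 6 * M ^ 3 + M ^ 4 + M ^ 5) * (n - 1) ^ 2 * v ^ 2
    + (3 + 11 * M + 12 * M ^ 2 - 16 * M ^ 3 - 3 * M ^ 4 + M ^ 5) * (n - 1) * n * v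
    + 2 * (2 - 4 * M - 3 * M ^ 2 + 5 * M ^ 3 + M ^ 4 - M ^ 5) * n ^ 2

/-- The coefficient `P₀(v)` of the auxiliary quadratic `ψ`. -/
noncomputable def P0 (M n v : ℝ) : ℝ :=
  2 * (M ^ 4 + 2 * M ^ 3 - 4 * M ^ 2 - 2 * M - 1) * (n - 1) * n * v
    - 2 * (M ^ 4 + 2 * M ^ 3 - 2 * M ^ 2 - 2 * M + 1) * n ^ 2

/-- The auxiliary quadratic `ψ(α) = P₂(v)α² + P₁(v)α + P₀(v)`. -/
noncomputable def psi (M n v α : ℝ) : ℝ :=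
  P2 M n v * α ^ 2 + P1 M n v * α + P0 M n v

/-!
Writing `w = (n - 1) v`, the sum `P₂ + P₁ + P₀` factors as `(M - 1) w` times a function
`A n + B w` that is affine in `w`. The constraint reads `0 ≤ w ≤ (M - 1) n / M`, and an affine
function is nonpositive on an interval once it is nonpositive at both endpoints: at `w = 0` the
value is `A n` with `A = -M⁴ - 6M² - 2M + 1 < 0`, and at the right endpoint it is
`n (-2M⁵ + M⁴ - 6M² - 1) / M < 0`.
-/

theorem psi_one (M n v : ℝ) : psi M n v 1 = P2 M n v + P1 M n v + P0 M n v := by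
  unfold psi; ring

theorem P2_add_P1_add_P0 (M n v : ℝ) :
    P2 M n v + P1 M n v + P0 M n v
      = (M - 1) * (n - 1) * v
          * ((-M ^ 4 - 6 * M ^ 2 - 2 * M + 1) * n
              + (-M ^ 4 + 6 * M ^ 2 + 2 * M + 1) * (n - 1) * v) := by
  unfold P2 P1 P0; ring

theorem add_mul_nonpos_of_endpoints {a b w W : ℝ} (ha : a ≤ 0) (hW : a + b * W ≤ 0)
    (hw₀ : 0 ≤ w) (hwW : w ≤ W) : a + b * w ≤ 0 := by
  rcases le_total b 0 with hb | hb
  · nlinarith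
  · nlinarith

theorem affine_factor_nonpos {M n w : ℝ} (hM : 1 < M) (hn : 0 ≤ n) (hw : 0 ≤ w)
    (hbound : w * M ≤ (M - 1) * n) :
    (-M ^ 4 - 6 * M ^ 2 - 2 * M + 1) * n + (-M ^ 4 + 6 * M ^ 2 + 2 * M + 1) * w ≤ 0 := by
  have hM₀ : 0 < M := by linarith
  have hA : -M ^ 4 - 6 * M ^ 2 - 2 * M + 1 ≤ 0 := by nlinarith [pow_pos hM₀ 4]
  refine add_mul_nonpos_of_endpoints (mul_nonpos_of_nonpos_of_nonneg hA hn) ?_ hw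
    ((le_div_iff₀ hM₀).2 hbound)
  have hC : -2 * M ^ 5 + M ^ 4 - 6 * M ^ 2 - 1 ≤ 0 := by nlinarith [pow_pos hM₀ 4]
  have hend : (-M ^ 4 - 6 * M ^ 2 - 2 * M + 1) * n
      + (-M ^ 4 + 6 * M ^ 2 + 2 * M + 1) * ((M - 1) * n / M)
        = n * (-2 * M ^ 5 + M ^ 4 - 6 * M ^ 2 - 1) / M := by
    field_simp; ring
  rw [hend]
  exact div_nonpos_of_nonpos_of_nonneg (mul_nonpos_of_nonneg_of_nonpos hn hC) hM₀.le

theorem stmt_9 (M : ℝ) (n : ℕ) (v : ℝ)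
    (hM : 1 < M) (hn : 1 ≤ n) (hv : 0 ≤ v)
    (hbound : ((n : ℝ) - 1) * M * v ≤ (M - 1) * n) :
    psi M (n : ℝ) v 1 = P2 M (n : ℝ) v + P1 M (n : ℝ) v + P0 M (n : ℝ) v ∧
    P2 M (n : ℝ) v + P1 M (n : ℝ) v + P0 M (n : ℝ) v
        = (M - 1) * ((n : ℝ) - 1) * v
            * ((-M ^ 4 - 6 * M ^ 2 - 2 * M + 1) * (n : ℝ)
                + (-M ^ 4 + 6 * M ^ 2 + 2 * M + 1) * ((n : ℝ) - 1) * v) ∧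
    psi M (n : ℝ) v 1 ≤ 0 := by
  have hn₁ : (1 : ℝ) ≤ n := by exact_mod_cast hn
  have hw : 0 ≤ ((n : ℝ) - 1) * v := mul_nonneg (by linarith) hv
  have hfactor := affine_factor_nonpos (n := n) hM (by linarith) hw
    (by linarith [mul_right_comm ((n : ℝ) - 1) M v])
  refine ⟨psi_one M n v, P2_add_P1_add_P0 M n v, ?_⟩
  rw [psi_one, P2_add_P1_add_P0, mul_assoc (M - 1)]
  rw [← mul_assoc] at hfactor
  exact mul_nonpos_of_nonneg_of_nonpos (mul_nonneg (by linarith) hw) hfactor
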